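/- arXiv:math/0202201 — 2 statements merged into one kernel-verified Lean document; each statement's English description precedes it below -/
import Mathlib

section
/- For all ξ, η ∈ ℝ³ and all indices 1 ≤ i, j ≤ 3, the null-form symbol q_{ij}(ξ,η) = ξᵢηⱼ − ξⱼηᵢ satisfies |q_{ij}(ξ,η)| ≤ |ξ × η| ≤ |ξ + η| · |ξ|^(1/2) · |η|^(1/2). -/
noncomputable def crossE (ξ η : EuclideanSpace ℝ (Fin 3)) : EuclideanSpace ℝ (Fin 3) :=
  (WithLp.equiv 2 (Fin 3 → ℝ)).symm
    ![ξ 1 * η 2 - ξ 2 * η 1, ξ 2 * η 0 - ξ 0 * η 2, ξ 0 * η 1 - ξ 1 * η 0]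

/-!
Each `q_ij(ξ, η)` is `0` or `±` a coordinate of `ξ × η`. Since `ξ × ξ = η × η = 0`, we have
`ξ × η = ξ × (ξ + η) = (ξ + η) × η`, so Lagrange's identity bounds `|ξ × η|` by both
`|ξ| |ξ + η|` and `|ξ + η| |η|`; the geometric mean of these two bounds is the claim.
-/

open Matrix

theorem EuclideanSpace.real_norm_sq_eq_dotProduct {ι : Type*} [Fintype ι]
    (v : EuclideanSpace ℝ ι) : ‖v‖ ^ 2 = v.ofLp ⬝ᵥ v.ofLp := by
  rw [← real_inner_self_eq_norm_sq, EuclideanSpace.inner_eq_star_dotProduct, star_trivial]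

theorem crossE_eq_toLp_cross (ξ η : EuclideanSpace ℝ (Fin 3)) :
    crossE ξ η = WithLp.toLp 2 (ξ.ofLp ⨯₃ η.ofLp) := rfl

theorem norm_crossE_sq (ξ η : EuclideanSpace ℝ (Fin 3)) :
    ‖crossE ξ η‖ ^ 2 = ‖ξ‖ ^ 2 * ‖η‖ ^ 2 - inner ℝ ξ η ^ 2 := by
  simp only [EuclideanSpace.real_norm_sq_eq_dotProduct, crossE_eq_toLp_cross, cross_dot_cross,
    EuclideanSpace.inner_eq_star_dotProduct, star_trivial, dotProduct_comm η.ofLp]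
  ring

theorem norm_crossE_le (ξ η : EuclideanSpace ℝ (Fin 3)) : ‖crossE ξ η‖ ≤ ‖ξ‖ * ‖η‖ := by
  rw [← pow_le_pow_iff_left₀ (norm_nonneg _) (by positivity) two_ne_zero, norm_crossE_sq]
  nlinarith [sq_nonneg (inner ℝ ξ η)]

theorem crossE_add_self_right (ξ η : EuclideanSpace ℝ (Fin 3)) :
    crossE ξ (ξ + η) = crossE ξ η := by
  simp [crossE_eq_toLp_cross, cross_self]

theorem crossE_add_self_left (ξ η : EuclideanSpace ℝ (Fin 3)) :
    crossE (ξ + η) η = crossE ξ η := by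
  simp [crossE_eq_toLp_cross, cross_self]

theorem abs_sub_mul_le_norm_crossE (ξ η : EuclideanSpace ℝ (Fin 3)) (i j : Fin 3) :
    |ξ i * η j - ξ j * η i| ≤ ‖crossE ξ η‖ := by
  have h k : |crossE ξ η k| ≤ ‖crossE ξ η‖ := PiLp.norm_apply_le (crossE ξ η) k
  have h0 := h 0
  have h1 := h 1
  have h2 := h 2
  fin_cases i <;> fin_cases j <;> simp [crossE] at h0 h1 h2 ⊢ <;>
    first | assumption | rwa [abs_sub_comm]

theorem le_mul_sqrt_mul_sqrt {c s a b : ℝ} (hc : 0 ≤ c) (hs : 0 ≤ s) (ha : 0 ≤ a)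
    (hca : c ≤ s * a) (hcb : c ≤ s * b) : c ≤ s * √a * √b :=
  calc c = √(c * c) := (Real.sqrt_mul_self hc).symm
    _ ≤ √(s * a * (s * b)) := Real.sqrt_le_sqrt (mul_le_mul hca hcb hc (hc.trans hca))
    _ = s * √a * √b := by
      rw [mul_mul_mul_comm, Real.sqrt_mul (mul_self_nonneg s), Real.sqrt_mul_self hs,
        Real.sqrt_mul ha, mul_assoc]

theorem nullform_symbol_estimate (ξ η : EuclideanSpace ℝ (Fin 3)) (i j : Fin 3) :
    |ξ i * η j - ξ j * η i| ≤ ‖crossE ξ η‖ ∧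
      ‖crossE ξ η‖ ≤ ‖ξ + η‖ * ‖ξ‖ ^ ((1 : ℝ) / 2) * ‖η‖ ^ ((1 : ℝ) / 2) := by
  refine ⟨abs_sub_mul_le_norm_crossE ξ η i j, ?_⟩
  have hξ : ‖crossE ξ η‖ ≤ ‖ξ + η‖ * ‖ξ‖ := by
    simpa only [crossE_add_self_right, mul_comm] using norm_crossE_le ξ (ξ + η)
  have hη : ‖crossE ξ η‖ ≤ ‖ξ + η‖ * ‖η‖ := by
    simpa only [crossE_add_self_left] using norm_crossE_le (ξ + η) η
  simpa only [Real.sqrt_eq_rpow] using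
    le_mul_sqrt_mul_sqrt (norm_nonneg _) (norm_nonneg _) (norm_nonneg _) hξ hη
end

section
/- Let k : (0,∞) → (0,∞) be differentiable with |k'(r)| ≤ 1 for all r > 0. Fix τ ∈ ℝ, ξ ∈ ℝ³, and a unit vector ω ∈ S² not collinear with ξ, and let θ(r) be the angle between rω and ξ − rω. Define f(r) = τ − r ± k(|ξ − rω|). Then f'(r) ≤ −1 + |cos θ(r)| < 0 for all r > 0, and moreover |f'(r)| ≥ (1/2) sin²θ(r). -/
open scoped RealInnerProductSpace

/-! The derivative is `f'(r) = -1 ∓ k'(|ξ - rω|) cos θ(r)`, so `|k'| ≤ 1` gives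
`f'(r) ≤ -1 + |cos θ(r)|`. Since `ω` is a unit vector and `ξ - rω` is never a multiple of `ω`,
Cauchy–Schwarz is strict: `|cos θ(r)| < 1`. Finally `1 - |cos θ| ≥ (1/2) sin²θ` is `(1 - |cos θ|)² ≥ 0`. -/

section InnerProductSpace

variable {F : Type*} [NormedAddCommGroup F] [InnerProductSpace ℝ F]

theorem HasDerivAt.norm {f : ℝ → F} {f' : F} {x : ℝ} (hf : HasDerivAt f f' x) (h0 : f x ≠ 0) :
    HasDerivAt (fun y => ‖f y‖) (⟪f x, f'⟫ / ‖f x‖) x := by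
  have hsqrt := hf.norm_sq.sqrt (pow_ne_zero 2 (norm_ne_zero_iff.2 h0))
  simp only [Real.sqrt_sq (norm_nonneg _)] at hsqrt
  convert hsqrt using 1
  ring

theorem hasDerivAt_norm_sub_smul {ξ ω : F} {r : ℝ} (h0 : ξ - r • ω ≠ 0) :
    HasDerivAt (fun s : ℝ => ‖ξ - s • ω‖) (-(⟪ω, ξ - r • ω⟫ / ‖ξ - r • ω‖)) r := by
  have hline : HasDerivAt (fun s : ℝ => ξ - s • ω) (-ω) r := by
    simpa using ((hasDerivAt_id r).smul_const ω).const_sub ξ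
  convert hline.norm h0 using 1
  rw [inner_neg_right, real_inner_comm, neg_div]

theorem abs_real_inner_div_norm_lt_one_of_ne_smul {ω v : F} (hω : ‖ω‖ = 1)
    (hv : ∀ t : ℝ, v ≠ t • ω) : |⟪ω, v⟫ / ‖v‖| < 1 := by
  have hdiv : ⟪ω, v⟫ / ‖v‖ = ⟪ω, v⟫ / (‖ω‖ * ‖v‖) := by rw [hω, one_mul]
  rw [hdiv]
  refine (abs_real_inner_div_norm_mul_norm_le_one ω v).lt_of_ne fun h => ?_
  obtain ⟨-, t, -, rfl⟩ := (abs_real_inner_div_norm_mul_norm_eq_one_iff ω v).1 h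
  exact hv t rfl

end InnerProductSpace

theorem half_mul_one_sub_sq_le_one_sub_abs (c : ℝ) : 1 / 2 * (1 - c ^ 2) ≤ 1 - |c| := by
  nlinarith [sq_abs c, sq_nonneg (1 - |c|)]

theorem phase_derivative_bound_general
    (k : ℝ → ℝ) (k' : ℝ → ℝ)
    (hk : ∀ r : ℝ, 0 < r → HasDerivAt k (k' r) r)
    (hk' : ∀ r : ℝ, 0 < r → |k' r| ≤ 1)
    (τ : ℝ) (ξ ω : EuclideanSpace ℝ (Fin 3)) (hω : ‖ω‖ = 1)
    (hcol : ∀ t : ℝ, ξ ≠ t • ω)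
    (ε : ℝ) (hε : ε = 1 ∨ ε = -1) :
    ∀ r : ℝ, 0 < r →
      deriv (fun r : ℝ => τ - r + ε * k ‖ξ - r • ω‖) r ≤
          -1 + |⟪ω, ξ - r • ω⟫ / ‖ξ - r • ω‖| ∧
      deriv (fun r : ℝ => τ - r + ε * k ‖ξ - r • ω‖) r < 0 ∧
      (1 / 2) * (1 - (⟪ω, ξ - r • ω⟫ / ‖ξ - r • ω‖) ^ 2) ≤
        |deriv (fun r : ℝ => τ - r + ε * k ‖ξ - r • ω‖) r| := by
  intro r _
  have hv : ∀ t : ℝ, ξ - r • ω ≠ t • ω := fun t h =>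
    hcol (r + t) (by rw [add_smul, ← h, add_sub_cancel])
  have hv0 : ξ - r • ω ≠ 0 := by simpa using hv 0
  set c := ⟪ω, ξ - r • ω⟫ / ‖ξ - r • ω‖
  have hc : |c| < 1 := abs_real_inner_div_norm_lt_one_of_ne_smul hω hv
  have hderiv : deriv (fun r : ℝ => τ - r + ε * k ‖ξ - r • ω‖) r
      = -1 - ε * k' ‖ξ - r • ω‖ * c := by
    have hkv := (hk _ (norm_pos_iff.2 hv0)).comp r (hasDerivAt_norm_sub_smul hv0)
    have hf : HasDerivAt (fun r : ℝ => τ - r + ε * k ‖ξ - r • ω‖)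
        (-1 + ε * (k' ‖ξ - r • ω‖ * -c)) r := by
      exact ((hasDerivAt_id r).const_sub τ).add (hkv.const_mul ε)
    rw [hf.deriv]
    ring
  have hdamp : |ε * k' ‖ξ - r • ω‖ * c| ≤ |c| := by
    have hεabs : |ε| = 1 := by rcases hε with rfl | rfl <;> simp
    rw [abs_mul, abs_mul, hεabs, one_mul]
    exact mul_le_of_le_one_left (abs_nonneg c) (hk' _ (norm_pos_iff.2 hv0))
  have hupper : deriv (fun r : ℝ => τ - r + ε * k ‖ξ - r • ω‖) r ≤ -1 + |c| := by
    rw [hderiv]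
    linarith [neg_le_abs (ε * k' ‖ξ - r • ω‖ * c)]
  refine ⟨hupper, by linarith, ?_⟩
  calc 1 / 2 * (1 - c ^ 2) ≤ 1 - |c| := half_mul_one_sub_sq_le_one_sub_abs c
    _ ≤ -deriv (fun r : ℝ => τ - r + ε * k ‖ξ - r • ω‖) r := by linarith
    _ ≤ _ := neg_le_abs _

/-- The phase function `f(r) = τ - r ± k(|ξ - rω|)` has strictly negative derivative,
with the quantitative bounds `f'(r) ≤ -1 + |cos θ(r)|` and `|f'(r)| ≥ (1/2) sin²θ(r)`,
where `θ(r)` is the angle between `rω` and `ξ - rω`. -/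
theorem phase_derivative_bound
    (k : ℝ → ℝ) (k' : ℝ → ℝ)
    (hkpos : ∀ r : ℝ, 0 < r → 0 < k r)
    (hk : ∀ r : ℝ, 0 < r → HasDerivAt k (k' r) r)
    (hk' : ∀ r : ℝ, 0 < r → |k' r| ≤ 1)
    (τ : ℝ) (ξ ω : EuclideanSpace ℝ (Fin 3)) (hω : ‖ω‖ = 1)
    (hcol : ∀ t : ℝ, ξ ≠ t • ω)
    (ε : ℝ) (hε : ε = 1 ∨ ε = -1) :
    ∀ r : ℝ, 0 < r →
      deriv (fun r : ℝ => τ - r + ε * k ‖ξ - r • ω‖) r ≤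
          -1 + |⟪ω, ξ - r • ω⟫ / ‖ξ - r • ω‖| ∧
      deriv (fun r : ℝ => τ - r + ε * k ‖ξ - r • ω‖) r < 0 ∧
      (1 / 2) * (1 - (⟪ω, ξ - r • ω⟫ / ‖ξ - r • ω‖) ^ 2) ≤
        |deriv (fun r : ℝ => τ - r + ε * k ‖ξ - r • ω‖) r| :=
  phase_derivative_bound_general k k' hk hk' τ ξ ω hω hcol ε hε
end
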